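/- arXiv:2601.20500 — 4 statements merged into one kernel-verified Lean document; each statement's English description precedes it below -/
import Mathlib

section
/- Let F : ℕ → ℕ be a function such that every finite group acting faithfully and transitively on a finite set of size n whose derangement graph contains no clique of size c satisfies n ≤ F(c). Then for every finite group G with subgroups U and U' satisfying [G : U'] = n and ⋃_{g ∈ G} g U g⁻¹ = ⋃_{g ∈ G} g U' g⁻¹, one has [G : U] ≤ F(n + 1). -/
/-- An element `g` is a derangement for the action of `G` on `Ω` if it fixes no point. -/
def IsDerangement (G Ω : Type*) [Group G] [MulAction G Ω] (g : G) : Prop :=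
  ∀ ω : Ω, g • ω ≠ ω

/-- The derangement graph of the action of `G` on `Ω` contains a clique of size `c`. -/
def HasCliqueOfSize (G Ω : Type*) [Group G] [MulAction G Ω] (c : ℕ) : Prop :=
  ∃ C : Finset G, C.card = c ∧
    ∀ x ∈ C, ∀ y ∈ C, x ≠ y → IsDerangement G Ω (x * y⁻¹)

/-- The union `⋃_{g ∈ G} g U g⁻¹` of all conjugates of the subgroup `U`. -/
def conjUnion {G : Type*} [Group G] (U : Subgroup G) : Set G :=
  ⋃ g : G, (fun x => g * x * g⁻¹) '' (U : Set G)

lemma isDerangement_not_conjUnion {G : Type} [Group G] (U : Subgroup G) (z : G)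
    (hz : IsDerangement G (G ⧸ U) z) : z ∉ conjUnion U := by
  intro hmem
  rcases Set.mem_iUnion.mp hmem with ⟨g, u, hu, huz⟩
  apply hz ((g : G) : G ⧸ U)
  rw [← huz]
  show QuotientGroup.mk ((g * u * g⁻¹) * g) = QuotientGroup.mk g
  rw [QuotientGroup.eq]
  simpa using U.inv_mem hu

theorem stmt1 (F : ℕ → ℕ)
    (hF : ∀ (G : Type) [Group G] [Fintype G] (Ω : Type) [Fintype Ω] [MulAction G Ω]
      [FaithfulSMul G Ω] [MulAction.IsPretransitive G Ω] (n c : ℕ),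
      Fintype.card Ω = n → ¬ HasCliqueOfSize G Ω c → n ≤ F c)
    (G : Type) [Group G] [Fintype G] (U U' : Subgroup G) (n : ℕ)
    (hn : U'.index = n) (h : conjUnion U = conjUnion U') :
    U.index ≤ F (n + 1) := by
  classical
  set P := MulAction.toPermHom G (G ⧸ U) with hP
  let G' := P.range
  let Ω := G ⧸ U
  haveI : Fintype Ω := Fintype.ofFinite _
  haveI : Fintype G' := Fintype.ofFinite _
  -- the smul of G' on Ω
  haveI : FaithfulSMul G' Ω := by
    constructor
    intro σ τ hστ
    ext ω
    have := hστ ω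
    simpa [Subgroup.smul_def, Equiv.Perm.smul_def] using this
  haveI : MulAction.IsPretransitive G' Ω := by
    constructor
    intro ω₁ ω₂
    obtain ⟨g, hg⟩ := MulAction.exists_smul_eq G ω₁ ω₂
    refine ⟨⟨P g, g, rfl⟩, ?_⟩
    simpa [Subgroup.smul_def, Equiv.Perm.smul_def, hP, MulAction.toPermHom] using hg
  have hcard : Fintype.card Ω = U.index := by
    rw [← Nat.card_eq_fintype_card, Subgroup.index]
  have hnoclique : ¬ HasCliqueOfSize G' Ω (n + 1) := by
    rintro ⟨C, hCcard, hC⟩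
    -- choose preimages
    have hsec : ∀ σ : G', ∃ g : G, P g = (σ : Equiv.Perm Ω) := fun σ => σ.2
    choose s hs using hsec
    -- map to G ⧸ U'
    have key : ∀ σ ∈ C, ∀ τ ∈ C, σ ≠ τ →
        (QuotientGroup.mk (s σ)⁻¹ : G ⧸ U') ≠ (QuotientGroup.mk (s τ)⁻¹ : G ⧸ U') := by
      intro σ hσ τ hτ hne heq
      have hder := hC σ hσ τ hτ hne
      have hder' : IsDerangement G Ω (s σ * (s τ)⁻¹) := by
        intro ω hω
        apply hder ω
        have : ((σ * τ⁻¹ : G') : Equiv.Perm Ω) = P (s σ * (s τ)⁻¹) := by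
          simp [hs]
        show (σ * τ⁻¹) • ω = ω
        rw [Subgroup.smul_def, Equiv.Perm.smul_def, this]
        exact hω
      have hnotin : (s σ * (s τ)⁻¹) ∉ conjUnion U' :=
        h ▸ isDerangement_not_conjUnion U _ hder'
      apply hnotin
      have : (s σ * (s τ)⁻¹) ∈ (U' : Set G) := by
        have := QuotientGroup.eq.mp heq
        simpa using this
      exact Set.mem_iUnion.mpr ⟨1, s σ * (s τ)⁻¹, this, by group⟩
    -- injection from C to G ⧸ U'
    have hinj : Set.InjOn (fun σ : G' => (QuotientGroup.mk (s σ)⁻¹ : G ⧸ U')) (C : Set G') := by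
      intro σ hσ τ hτ heq
      by_contra hne
      exact key σ hσ τ hτ hne heq
    have hle : C.card ≤ Nat.card (G ⧸ U') := by
      haveI : Fintype (G ⧸ U') := Fintype.ofFinite _
      rw [Nat.card_eq_fintype_card]
      calc C.card = (C.image (fun σ : G' => (QuotientGroup.mk (s σ)⁻¹ : G ⧸ U'))).card :=
            (Finset.card_image_of_injOn hinj).symm
        _ ≤ Fintype.card (G ⧸ U') := Finset.card_le_univ _
    rw [hCcard] at hle
    have : Nat.card (G ⧸ U') = n := hn
    omega
  have := hF G' Ω (Fintype.card Ω) (n + 1) rfl hnoclique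
  omega
end

section
/- Let s, a and σ be positive integers, let X be a finite set of cardinality s, and let π_1, …, π_σ be partitions of X such that every part of π_i has cardinality at least a, for every i ∈ {1, …, σ}. Then there exists a subset Y ⊆ X with |Y| ≥ s(1 − 1/a)^σ such that Y contains no part of π_i for any i ∈ {1, …, σ}. -/
open Finset

lemma step_lemma {X : Type} [Fintype X] [DecidableEq X] {a : ℕ} (ha : 0 < a)
    (π : Finpartition (Finset.univ : Finset X)) (hπ : ∀ P ∈ π.parts, a ≤ P.card)
    (Y : Finset X) :
    ∃ Y' : Finset X, Y' ⊆ Y ∧ (Y.card : ℝ) * (1 - 1 / (a : ℝ)) ≤ Y'.card ∧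
      ∀ P ∈ π.parts, ¬ P ⊆ Y' := by
  classical
  set F : Finset (Finset X) := π.parts.filter (fun P => P ⊆ Y) with hF
  set g : Finset X → Finset X := fun P => if h : P.Nonempty then {h.choose} else ∅ with hg
  set R : Finset X := F.biUnion g with hRdef
  have hFparts : ∀ P ∈ F, P ∈ π.parts ∧ P ⊆ Y := by
    intro P hP; simpa [hF] using (mem_filter.mp hP)
  -- R ⊆ Y
  have hRY : R ⊆ Y := by
    intro x hx
    obtain ⟨P, hP, hxg⟩ := mem_biUnion.mp hx
    obtain ⟨hP1, hP2⟩ := hFparts P hP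
    have hne : P.Nonempty := π.nonempty_of_mem_parts hP1
    simp only [hg, dif_pos hne, mem_singleton] at hxg
    exact hP2 (hxg ▸ hne.choose_spec)
  -- card R ≤ card F
  have hRF : R.card ≤ F.card := by
    calc R.card ≤ ∑ P ∈ F, (g P).card := card_biUnion_le
      _ ≤ ∑ P ∈ F, 1 := by
          apply Finset.sum_le_sum; intro P _
          by_cases h : P.Nonempty <;> simp [hg, h]
      _ = F.card := by simp
  -- a * card F ≤ card Y
  have haF : a * F.card ≤ Y.card := by
    have hdisj : (F : Set (Finset X)).PairwiseDisjoint id :=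
      π.disjoint.subset (by intro P hP; exact (hFparts P hP).1)
    have hcard : (F.biUnion id).card = ∑ P ∈ F, P.card :=
      card_biUnion (fun P hP Q hQ hne => hdisj hP hQ hne)
    calc a * F.card = ∑ _P ∈ F, a := by rw [Finset.sum_const, smul_eq_mul, mul_comm]
      _ ≤ ∑ P ∈ F, P.card := Finset.sum_le_sum (fun P hP => hπ P (hFparts P hP).1)
      _ = (F.biUnion id).card := hcard.symm
      _ ≤ Y.card := card_le_card (by
          intro x hx
          obtain ⟨P, hP, hxP⟩ := mem_biUnion.mp hx
          exact (hFparts P hP).2 hxP)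
  refine ⟨Y \ R, sdiff_subset, ?_, ?_⟩
  · have hsub : R.card ≤ Y.card := card_le_card hRY
    have hcard : ((Y \ R).card : ℝ) = (Y.card : ℝ) - R.card := by
      rw [card_sdiff_of_subset hRY, Nat.cast_sub hsub]
    have h1 : (R.card : ℝ) ≤ (Y.card : ℝ) / a := by
      rw [le_div_iff₀ (by exact_mod_cast ha)]
      calc (R.card : ℝ) * a ≤ (F.card : ℝ) * a := by
            apply mul_le_mul_of_nonneg_right (by exact_mod_cast hRF) (by positivity)
        _ ≤ Y.card := by
            rw [mul_comm]; exact_mod_cast haF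
    rw [hcard]
    have : (Y.card : ℝ) * (1 - 1 / a) = Y.card - Y.card / a := by ring
    rw [this]
    linarith [h1]
  · intro P hP hPsub
    have hPY : P ⊆ Y := hPsub.trans sdiff_subset
    have hPF : P ∈ F := mem_filter.mpr ⟨hP, hPY⟩
    have hne : P.Nonempty := π.nonempty_of_mem_parts hP
    have hxR : hne.choose ∈ R := by
      apply mem_biUnion.mpr
      exact ⟨P, hPF, by simp [hg, dif_pos hne]⟩
    have := hPsub hne.choose_spec
    exact (mem_sdiff.mp this).2 hxR

theorem stmt5 (s a σ : ℕ) (hs : 0 < s) (ha : 0 < a) (hσ : 0 < σ)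
    (X : Type) [Fintype X] [DecidableEq X] (hX : Fintype.card X = s)
    (π : Fin σ → Finpartition (Finset.univ : Finset X))
    (hπ : ∀ i : Fin σ, ∀ P ∈ (π i).parts, a ≤ P.card) :
    ∃ Y : Finset X,
      (s : ℝ) * (1 - 1 / (a : ℝ)) ^ σ ≤ (Y.card : ℝ) ∧
      ∀ i : Fin σ, ∀ P ∈ (π i).parts, ¬ P ⊆ Y := by
  have ha' : (0:ℝ) ≤ 1 - 1 / a := by
    have : (1:ℝ) ≤ a := by exact_mod_cast ha
    have h1 : (1:ℝ)/a ≤ 1 := by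
      rw [div_le_one (by linarith)]; exact this
    linarith
  have key : ∀ k, k ≤ σ → ∃ Y : Finset X,
      (s : ℝ) * (1 - 1 / (a : ℝ)) ^ k ≤ (Y.card : ℝ) ∧
      ∀ i : Fin σ, i.1 < k → ∀ P ∈ (π i).parts, ¬ P ⊆ Y := by
    intro k
    induction k with
    | zero =>
      intro _
      exact ⟨Finset.univ, by simp [Finset.card_univ, hX], fun i hi => absurd hi (Nat.not_lt_zero _)⟩
    | succ k ih =>
      intro hk
      obtain ⟨Y, hY1, hY2⟩ := ih (Nat.le_of_succ_le hk)
      have hkσ : k < σ := hk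
      obtain ⟨Y', hsub, hcard, hno⟩ := step_lemma ha (π ⟨k, hkσ⟩) (hπ ⟨k, hkσ⟩) Y
      refine ⟨Y', ?_, ?_⟩
      · calc (s : ℝ) * (1 - 1 / a) ^ (k+1)
            = ((s : ℝ) * (1 - 1/a)^k) * (1 - 1/a) := by ring
          _ ≤ (Y.card : ℝ) * (1 - 1/a) := mul_le_mul_of_nonneg_right hY1 ha'
          _ ≤ Y'.card := hcard
      · intro i hi P hP hPsub
        rcases Nat.lt_succ_iff_lt_or_eq.mp hi with h | h
        · exact hY2 i h P hP (hPsub.trans hsub)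
        · have : i = ⟨k, hkσ⟩ := Fin.ext h
          exact hno P (this ▸ hP) hPsub
  obtain ⟨Y, h1, h2⟩ := key σ le_rfl
  exact ⟨Y, h1, fun i => h2 i i.2⟩
end

section
/- Let G be a finite group with subgroups U and U' such that ⋃_{g ∈ G} g U g⁻¹ = ⋃_{g ∈ G} g U' g⁻¹, and let n = [G : U']. Consider the action of G by right multiplication on the set Ω of right cosets of U in G. Then every subset C ⊆ G such that x y⁻¹ is a derangement on Ω for all distinct x, y ∈ C satisfies |C| ≤ n. In particular, the derangement graph of G acting on Ω has no clique of size n + 1. -/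
theorem stmt6 (G : Type) [Group G] [Fintype G] (U U' : Subgroup G)
    (h : conjUnion U = conjUnion U') (n : ℕ) (hn : U'.index = n) :
    (∀ C : Finset G,
        (∀ x ∈ C, ∀ y ∈ C, x ≠ y → IsDerangement G (G ⧸ U) (x * y⁻¹)) →
        C.card ≤ n) ∧
      ¬ HasCliqueOfSize G (G ⧸ U) (n + 1) := by
  have key : ∀ C : Finset G,
      (∀ x ∈ C, ∀ y ∈ C, x ≠ y → IsDerangement G (G ⧸ U) (x * y⁻¹)) →
      C.card ≤ n := by
    intro C hC
    -- if g ∈ conjUnion U then g fixes a point of G ⧸ U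
    have fix : ∀ g : G, g ∈ conjUnion U → ¬ IsDerangement G (G ⧸ U) g := by
      intro g hg hd
      obtain ⟨_, ⟨a, rfl⟩, u, hu, rfl⟩ := hg
      apply hd ((a : G) : G ⧸ U)
      show (((a * u * a⁻¹) * a : G) : G ⧸ U) = (a : G ⧸ U)
      rw [QuotientGroup.eq]
      simpa using U.inv_mem hu
    -- elements of C lie in distinct right cosets of U'
    have hinj : Set.InjOn (fun x : G => ((x⁻¹ : G) : G ⧸ U')) C := by
      intro x hx y hy hxy
      by_contra hne
      have hmem : x * y⁻¹ ∈ conjUnion U' := by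
        refine Set.mem_iUnion.2 ⟨1, ⟨x * y⁻¹, ?_, by group⟩⟩
        have := (QuotientGroup.eq (s := U')).1 hxy
        simpa using this
      exact fix _ (h ▸ hmem) (hC x hx y hy hne)
    classical
    haveI : Fintype (G ⧸ U') := Fintype.ofFinite _
    have : C.card ≤ Fintype.card (G ⧸ U') := by
      calc C.card = (C.image (fun x : G => ((x⁻¹ : G) : G ⧸ U'))).card :=
            (Finset.card_image_of_injOn hinj).symm
        _ ≤ Fintype.card (G ⧸ U') := Finset.card_le_univ _
    rwa [← Nat.card_eq_fintype_card, ← Subgroup.index, hn] at this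
  refine ⟨key, ?_⟩
  rintro ⟨C, hcard, hC⟩
  have := key C hC
  omega
end

section
/- Let G be a finite group acting transitively on a finite set Ω, let N be an abelian normal subgroup of G, and let c ≥ 2 be an integer. Suppose the derangement graph of the action of N on Ω contains no clique of size c. Then for every ω ∈ Ω, the index [N : N_ω] (that is, the size of the N-orbit of ω) is at most binom(c,2) · m, where m is the number of N-orbits on Ω and N_ω is the stabilizer of ω in N. -/
open MulAction Finset

theorem stmt10 (G : Type) [Group G] [Fintype G] (Ω : Type) [Fintype Ω] [MulAction G Ω]
    [MulAction.IsPretransitive G Ω] (N : Subgroup G) [N.Normal]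
    (habel : ∀ x ∈ N, ∀ y ∈ N, x * y = y * x) (c : ℕ) (hc : 2 ≤ c)
    (hclique : ¬ ∃ C : Finset G, (↑C : Set G) ⊆ (N : Set G) ∧ C.card = c ∧
        ∀ x ∈ C, ∀ y ∈ C, x ≠ y → ∀ ω : Ω, (x * y⁻¹) • ω ≠ ω) :
    ∀ ω : Ω,
      Nat.card (MulAction.orbit (↥N) ω) ≤
        c.choose 2 * Nat.card (Quotient (MulAction.orbitRel (↥N) Ω)) := by
  intro ω
  classical
  by_contra hlt
  push_neg at hlt
  set m := Nat.card (Quotient (MulAction.orbitRel (↥N) Ω)) with hm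
  set k := Nat.card (MulAction.orbit (↥N) ω) with hk
  set nN := Nat.card (↥N) with hnN
  have hNormal : N.Normal := ‹N.Normal›
  haveI : Nonempty (MulAction.orbit (↥N) ω) := ⟨⟨ω, MulAction.mem_orbit_self ω⟩⟩
  have hkpos : 0 < k := Nat.card_pos
  have hnNpos : 0 < nN := Nat.card_pos
  -- all N-orbits have the same size k
  have horb : ∀ ω' : Ω, Nat.card (MulAction.orbit (↥N) ω') = k := by
    intro ω'
    obtain ⟨g, hg⟩ := MulAction.exists_smul_eq G ω ω'
    have himg : MulAction.orbit (↥N) ω' = (fun x => g • x) '' MulAction.orbit (↥N) ω := by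
      ext x
      constructor
      · rintro ⟨n, rfl⟩
        refine ⟨(⟨g⁻¹ * (n : G) * g, ?_⟩ : ↥N) • ω, MulAction.mem_orbit _ _, ?_⟩
        · simpa using hNormal.conj_mem (n : G) n.2 g⁻¹
        · show g • ((g⁻¹ * (n : G) * g) • ω) = (n : G) • ω'
          rw [← hg]
          rw [smul_smul, smul_smul]
          congr 1
          group
      · rintro ⟨x, ⟨n, rfl⟩, rfl⟩
        refine ⟨⟨g * (n : G) * g⁻¹, hNormal.conj_mem (n : G) n.2 g⟩, ?_⟩
        show (g * (n : G) * g⁻¹) • ω' = g • ((n : G) • ω)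
        rw [← hg, smul_smul, smul_smul]
        congr 1
        group
    rw [himg, Nat.card_coe_set_eq, Set.ncard_image_of_injective _ (MulAction.injective g),
      ← Nat.card_coe_set_eq]
  -- orbit-stabilizer
  have hstab : ∀ ρ : Ω, Nat.card (MulAction.stabilizer (↥N) ρ) * k = nN := by
    intro ρ
    have h1 := MulAction.index_stabilizer (↥N) ρ
    have h2 := Subgroup.index_mul_card (MulAction.stabilizer (↥N) ρ)
    rw [h1] at h2
    rw [← horb ρ, mul_comm, Nat.card_coe_set_eq]
    exact h2
  -- finsets
  have hS : ∀ ρ : Ω, (Finset.univ.filter (fun n : G => n ∈ N ∧ n • ρ = ρ)).card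
      = Nat.card (MulAction.stabilizer (↥N) ρ) := by
    intro ρ
    rw [Nat.card_eq_fintype_card, ← Fintype.card_subtype]
    refine (Fintype.card_congr ?_).symm
    exact
      { toFun := fun x => ⟨x.1.1, x.1.2, x.2⟩
        invFun := fun x => ⟨⟨x.1, x.2.1⟩, x.2.2⟩
        left_inv := fun x => rfl
        right_inv := fun x => rfl }
  set D : Finset G := Finset.univ.filter (fun n : G => n ∈ N ∧ ∃ ω' : Ω, n • ω' = ω') with hD
  haveI : Fintype (Quotient (MulAction.orbitRel (↥N) Ω)) := Fintype.ofFinite _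
  set R : Finset Ω := Finset.univ.image (Quotient.out (s := MulAction.orbitRel (↥N) Ω)) with hR
  have hRcard : R.card ≤ m := by
    refine le_trans Finset.card_image_le ?_
    rw [hm, Nat.card_eq_fintype_card]
    exact Finset.card_univ.le
  have hDsub : D ⊆ R.biUnion (fun ρ => Finset.univ.filter (fun n : G => n ∈ N ∧ n • ρ = ρ)) := by
    intro n hn
    rw [hD, Finset.mem_filter] at hn
    obtain ⟨-, hnN', ω', hfix⟩ := hn
    set q : Quotient (MulAction.orbitRel (↥N) Ω) := Quotient.mk _ ω' with hq
    have hρR : q.out ∈ R := Finset.mem_image.2 ⟨q, Finset.mem_univ _, rfl⟩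
    have hrel : q.out ∈ MulAction.orbit (↥N) ω' :=
      Quotient.exact (Quotient.out_eq q)
    obtain ⟨u, hu⟩ := hrel
    refine Finset.mem_biUnion.2 ⟨q.out, hρR, Finset.mem_filter.2 ⟨Finset.mem_univ _, hnN', ?_⟩⟩
    have hu' : (u : G) • ω' = q.out := hu
    rw [← hu', smul_smul, habel n hnN' u u.2, ← smul_smul, hfix]
  have hDk : D.card * k ≤ m * nN := by
    calc D.card * k
        ≤ (∑ ρ ∈ R, (Finset.univ.filter (fun n : G => n ∈ N ∧ n • ρ = ρ)).card) * k := by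
          gcongr
          exact le_trans (Finset.card_le_card hDsub) Finset.card_biUnion_le
      _ = ∑ ρ ∈ R, (Finset.univ.filter (fun n : G => n ∈ N ∧ n • ρ = ρ)).card * k := by
          rw [Finset.sum_mul]
      _ = ∑ _ρ ∈ R, nN := by
          refine Finset.sum_congr rfl fun ρ _ => ?_
          rw [hS ρ, hstab ρ]
      _ = R.card * nN := by rw [Finset.sum_const, smul_eq_mul]
      _ ≤ m * nN := by gcongr
  -- (c-1) * m < k
  have hchoose : c - 1 ≤ c.choose 2 := by
    rw [Nat.choose_two_right, Nat.le_div_iff_mul_le (by norm_num)]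
    calc (c - 1) * 2 ≤ (c - 1) * c := by gcongr
      _ = c * (c - 1) := mul_comm _ _
  have hcm : (c - 1) * m < k := lt_of_le_of_lt (by gcongr) hlt
  set NF : Finset G := Finset.univ.filter (fun n : G => n ∈ N) with hNF
  have hNFcard : NF.card = nN := by
    rw [hnN, Nat.card_eq_fintype_card, Fintype.card_subtype]
  have h1D : (1 : G) ∈ D := by
    rw [hD, Finset.mem_filter]
    exact ⟨Finset.mem_univ _, N.one_mem, ω, one_smul _ _⟩
  -- greedy construction of cliques
  have key : ∀ t, t ≤ c → ∃ C : Finset G, (↑C : Set G) ⊆ (N : Set G) ∧ C.card = t ∧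
      ∀ x ∈ C, ∀ y ∈ C, x ≠ y → ∀ ω' : Ω, (x * y⁻¹) • ω' ≠ ω' := by
    intro t
    induction t with
    | zero => exact fun _ => ⟨∅, by simp, by simp, by simp⟩
    | succ t ih =>
      intro ht
      obtain ⟨C, hCN, hCcard, hCpair⟩ := ih (le_trans (Nat.le_succ t) ht)
      set B : Finset G := C.biUnion (fun x => D.image (fun d => d * x)) with hB
      have hBcard : B.card ≤ t * D.card := by
        refine le_trans Finset.card_biUnion_le ?_
        calc ∑ x ∈ C, (D.image (fun d => d * x)).card
            ≤ ∑ _x ∈ C, D.card := Finset.sum_le_sum fun x _ => Finset.card_image_le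
          _ = t * D.card := by rw [Finset.sum_const, smul_eq_mul, hCcard]
      have htm : t * m < k := by
        refine lt_of_le_of_lt ?_ hcm
        gcongr
        omega
      have hBltN : B.card < NF.card := by
        rw [hNFcard]
        refine lt_of_le_of_lt hBcard ?_
        have h1 : t * D.card * k ≤ t * (m * nN) := by
          rw [mul_assoc]
          gcongr
        have h2 : t * (m * nN) < k * nN := by
          rw [← mul_assoc]
          exact (Nat.mul_lt_mul_right hnNpos).mpr htm
        have h3 : t * D.card * k < nN * k := by
          rw [mul_comm nN k]
          exact lt_of_le_of_lt h1 h2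
        exact (Nat.mul_lt_mul_right hkpos).mp h3
      have hnon : (NF \ B).Nonempty := by
        rw [Finset.sdiff_nonempty]
        intro hsub
        exact absurd (Finset.card_le_card hsub) (not_le.2 hBltN)
      obtain ⟨y, hy⟩ := hnon
      rw [Finset.mem_sdiff] at hy
      obtain ⟨hyNF, hyB⟩ := hy
      have hyN : y ∈ N := (Finset.mem_filter.1 hyNF).2
      have hyC : y ∉ C := fun h =>
        hyB (Finset.mem_biUnion.2 ⟨y, h, Finset.mem_image.2 ⟨1, h1D, one_mul y⟩⟩)
      have hder : ∀ x ∈ C, ∀ ω' : Ω, (y * x⁻¹) • ω' ≠ ω' := by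
        intro x hx ω' hfix
        apply hyB
        have hxN : x ∈ N := hCN hx
        refine Finset.mem_biUnion.2 ⟨x, hx, Finset.mem_image.2 ⟨y * x⁻¹, ?_, by group⟩⟩
        rw [hD, Finset.mem_filter]
        exact ⟨Finset.mem_univ _, N.mul_mem hyN (N.inv_mem hxN), ω', hfix⟩
      refine ⟨insert y C, ?_, ?_, ?_⟩
      · intro z hz
        rcases Finset.mem_insert.1 hz with h | h
        · rw [h]; exact hyN
        · exact hCN h
      · rw [Finset.card_insert_of_notMem hyC, hCcard]
      · intro x hx z hz hne ω' hfix
        rcases Finset.mem_insert.1 hx with hxy | hxC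
        · rcases Finset.mem_insert.1 hz with hzy | hzC
          · exact hne (hxy.trans hzy.symm)
          · exact hder z hzC ω' (hxy ▸ hfix)
        · rcases Finset.mem_insert.1 hz with hzy | hzC
          · subst hzy
            have : (z * x⁻¹) • ω' = ω' := by
              conv_lhs => rw [← hfix]
              rw [smul_smul]
              rw [show z * x⁻¹ * (x * z⁻¹) = 1 by group, one_smul]
            exact hder x hxC ω' this
          · exact hCpair x hxC z hzC hne ω' hfix
  exact hclique (key c le_rfl)
end
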